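/- arXiv:2102.04094 — 7 statements merged into one kernel-verified Lean document; each statement's English description precedes it below -/
import Mathlib

section
/- For every nontrivial connected graph G, β_b(G) ≥ μ(G)(diam(G) − 1) ≥ 2(diam(G) − 1), where μ(G) is the maximum cardinality of a set of pairwise antipodal vertices of G. -/
/-- The eccentricity of a vertex: maximum distance to any other vertex. -/
noncomputable def eccent {V : Type*} [Fintype V] (G : SimpleGraph V) (v : V) : ℕ :=
  Finset.univ.sup (fun u => G.dist v u)

/-- The diameter of a finite graph: maximum eccentricity. -/
noncomputable def graphDiam {V : Type*} [Fintype V] (G : SimpleGraph V) : ℕ :=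
  Finset.univ.sup (fun v => eccent G v)

/-- `f` is an independent broadcast on `G`. -/
def IsIndepBroadcast {V : Type*} [Fintype V] (G : SimpleGraph V) (f : V → ℕ) : Prop :=
  (∀ v, f v ≤ eccent G v) ∧
  ∀ u v : V, u ≠ v → 0 < f u → 0 < f v → max (f u) (f v) < G.dist u v

/-- The broadcast independence number: maximum cost of an independent broadcast. -/
noncomputable def betaB {V : Type*} [Fintype V] (G : SimpleGraph V) : ℕ :=
  sSup {k | ∃ f : V → ℕ, IsIndepBroadcast G f ∧ ∑ v, f v = k}

/-- The independence number: maximum size of an independent set. -/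
noncomputable def alphaNum {V : Type*} [Fintype V] (G : SimpleGraph V) : ℕ :=
  sSup {k | ∃ s : Finset V, (∀ u ∈ s, ∀ v ∈ s, ¬ G.Adj u v) ∧ s.card = k}

/-- The maximum cardinality of a set of pairwise antipodal vertices. -/
noncomputable def muNum {V : Type*} [Fintype V] (G : SimpleGraph V) : ℕ :=
  sSup {k | ∃ s : Finset V,
    (∀ u ∈ s, ∀ v ∈ s, u ≠ v → G.dist u v = graphDiam G) ∧ s.card = k}

theorem stmt1 {V : Type*} [Fintype V] (G : SimpleGraph V)
    (hconn : G.Connected) (hnontrivial : ∃ u v : V, G.Adj u v) :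
    muNum G * (graphDiam G - 1) ≤ betaB G ∧
    2 * (graphDiam G - 1) ≤ muNum G * (graphDiam G - 1) := by
  classical
  obtain ⟨a, b, hab⟩ := hnontrivial
  haveI : Nonempty V := ⟨a⟩
  set d := graphDiam G with hd
  have hdist_le_ecc : ∀ v u : V, G.dist v u ≤ eccent G v := fun v u =>
    Finset.le_sup (Finset.mem_univ u)
  have hecc_le_d : ∀ v, eccent G v ≤ d := fun v => Finset.le_sup (Finset.mem_univ v)
  have hd1 : 1 ≤ d := by
    have h1 : 0 < G.dist a b := hconn.pos_dist_of_ne hab.ne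
    exact h1.trans_le ((hdist_le_ecc a b).trans (hecc_le_d a))
  -- find an antipodal pair
  obtain ⟨v, -, hv⟩ := Finset.exists_mem_eq_sup Finset.univ Finset.univ_nonempty
    (fun v => eccent G v)
  obtain ⟨u, -, hu⟩ := Finset.exists_mem_eq_sup Finset.univ Finset.univ_nonempty
    (fun u => G.dist v u)
  have hvu : G.dist v u = d := by
    have h1 : eccent G v = G.dist v u := hu
    have h2 : d = eccent G v := hv
    omega
  have hne : v ≠ u := by
    intro h; rw [h, SimpleGraph.dist_self] at hvu; omega
  -- μ bounds
  have hbdd_mu : BddAbove {k | ∃ s : Finset V,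
      (∀ u ∈ s, ∀ v ∈ s, u ≠ v → G.dist u v = graphDiam G) ∧ s.card = k} := by
    refine ⟨Fintype.card V, ?_⟩
    rintro k ⟨s, -, rfl⟩
    exact Finset.card_le_univ s
  have h2mu : 2 ≤ muNum G := by
    apply le_csSup hbdd_mu
    refine ⟨{v, u}, ?_, ?_⟩
    · intro x hx y hy hxy
      simp only [Finset.mem_insert, Finset.mem_singleton] at hx hy
      rcases hx with rfl | rfl <;> rcases hy with rfl | rfl <;>
        first
        | exact absurd rfl hxy
        | exact hvu
        | (rw [SimpleGraph.dist_comm]; exact hvu)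
    · rw [Finset.card_insert_of_notMem (by simpa using hne), Finset.card_singleton]
  -- obtain maximal antipodal set
  have hmu_mem : muNum G ∈ {k | ∃ s : Finset V,
      (∀ u ∈ s, ∀ v ∈ s, u ≠ v → G.dist u v = graphDiam G) ∧ s.card = k} := by
    exact Nat.sSup_mem ⟨0, ∅, by simp, rfl⟩ hbdd_mu
  obtain ⟨s, hs, hcard⟩ := hmu_mem
  -- the broadcast
  set f : V → ℕ := fun v => if v ∈ s then d - 1 else 0 with hf
  have h2card : 2 ≤ s.card := hcard ▸ h2mu
  have hbroad : IsIndepBroadcast G f := by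
    constructor
    · intro w
      by_cases hw : w ∈ s
      · obtain ⟨x, hx, hxw⟩ := Finset.exists_mem_ne (show 1 < s.card by omega) w
        have hdx : G.dist x w = d := hs x hx w hw hxw
        have : d ≤ eccent G w := by
          rw [← hdx, SimpleGraph.dist_comm]; exact hdist_le_ecc w x
        simp only [hf, if_pos hw]
        omega
      · simp [hf, hw]
    · intro x y hxy hfx hfy
      have hxs : x ∈ s := by by_contra h; simp [hf, h] at hfx
      have hys : y ∈ s := by by_contra h; simp [hf, h] at hfy
      have : G.dist x y = d := hs x hxs y hys hxy
      simp only [hf, if_pos hxs, if_pos hys] at hfx ⊢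
      rw [this]
      omega
  have hsum : ∑ w, f w = muNum G * (d - 1) := by
    simp only [hf]
    rw [Finset.sum_ite_mem, Finset.univ_inter, Finset.sum_const, hcard, smul_eq_mul]
  have hbdd_b : BddAbove {k | ∃ f : V → ℕ, IsIndepBroadcast G f ∧ ∑ v, f v = k} := by
    refine ⟨Fintype.card V * d, ?_⟩
    rintro k ⟨g, ⟨hg, -⟩, rfl⟩
    calc ∑ v, g v ≤ ∑ _v : V, d :=
          Finset.sum_le_sum fun v _ => (hg v).trans (hecc_le_d v)
      _ = Fintype.card V * d := by simp [Finset.sum_const, Finset.card_univ]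
  constructor
  · exact le_csSup hbdd_b ⟨f, hbroad, hsum⟩
  · exact Nat.mul_le_mul_right _ h2mu
end

section
/- For every integer a ≥ 2, the independence number of the circulant graph C(2a;1,a) equals a if a is odd, and a − 1 if a is even. -/
/-- The circulant graph `C(n;1,a)` on vertices `v_0,…,v_{n-1}` with edges
`v_i v_{i+1}` and `v_i v_{i+a}`, indices mod `n`. -/
def circulantGraph (n a : ℕ) : SimpleGraph (Fin n) :=
  SimpleGraph.fromRel (fun i j => (i.val + 1) % n = j.val ∨ (i.val + a) % n = j.val)

lemma mod_char {n x y : ℕ} (hn : 0 < n) (hy : y < n) (hx : x < 2*n) :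
    x % n = y ↔ (x = y ∨ x = y + n) := by
  rcases Nat.lt_or_ge x n with h | h
  · rw [Nat.mod_eq_of_lt h]; omega
  · rw [Nat.mod_eq_sub_mod h, Nat.mod_eq_of_lt (by omega)]; omega

lemma adj_iff (a : ℕ) (ha : 1 ≤ a) (u v : Fin (2*a)) :
    (circulantGraph (2*a) a).Adj u v ↔ u.val ≠ v.val ∧
      (u.val+1 = v.val ∨ v.val+1 = u.val ∨ u.val+a = v.val ∨ v.val+a = u.val ∨
       (v.val = 0 ∧ u.val+1 = 2*a) ∨ (u.val = 0 ∧ v.val+1 = 2*a)) := by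
  have hu := u.isLt; have hv := v.isLt
  have h2a : 0 < 2*a := by omega
  simp only [circulantGraph, SimpleGraph.fromRel_adj, ne_eq, Fin.ext_iff]
  rw [mod_char h2a hv (by omega), mod_char h2a hv (by omega),
      mod_char h2a hu (by omega), mod_char h2a hu (by omega)]
  constructor
  · rintro ⟨h1, h2⟩; exact ⟨h1, by omega⟩
  · rintro ⟨h1, h2⟩; exact ⟨h1, by omega⟩

lemma indep_card_le (a : ℕ) (ha : 2 ≤ a) (s : Finset (Fin (2*a)))
    (hs : ∀ u ∈ s, ∀ v ∈ s, ¬ (circulantGraph (2*a) a).Adj u v) : s.card ≤ a := by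
  have hinj : Set.InjOn (fun x : Fin (2*a) => x.val / 2) s := by
    intro x hx y hy hxy
    by_contra hne
    have hne' : x.val ≠ y.val := fun h => hne (Fin.ext h)
    refine hs x hx y hy ((adj_iff a (by omega) x y).mpr ⟨hne', ?_⟩)
    simp only at hxy
    omega
  calc s.card = (s.image (fun x : Fin (2*a) => x.val / 2)).card :=
        (Finset.card_image_of_injOn hinj).symm
    _ ≤ (Finset.range a).card := by
        apply Finset.card_le_card
        intro i hi
        simp only [Finset.mem_image] at hi
        obtain ⟨x, _, rfl⟩ := hi
        simp only [Finset.mem_range]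
        have := x.isLt; omega
    _ = a := Finset.card_range a

lemma even_case (a : ℕ) (ha : 2 ≤ a) (hae : a % 2 = 0) (s : Finset (Fin (2*a)))
    (hs : ∀ u ∈ s, ∀ v ∈ s, ¬ (circulantGraph (2*a) a).Adj u v)
    (hcard : s.card = a) : False := by
  have hinj : Set.InjOn (fun x : Fin (2*a) => x.val / 2) s := by
    intro x hx y hy hxy
    by_contra hne
    have hne' : x.val ≠ y.val := fun h => hne (Fin.ext h)
    refine hs x hx y hy ((adj_iff a (by omega) x y).mpr ⟨hne', ?_⟩)
    simp only at hxy
    omega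
  have himg : s.image (fun x : Fin (2*a) => x.val / 2) = Finset.range a := by
    apply Finset.eq_of_subset_of_card_le
    · intro i hi
      simp only [Finset.mem_image] at hi
      obtain ⟨x, _, rfl⟩ := hi
      simp only [Finset.mem_range]
      have := x.isLt; omega
    · rw [Finset.card_range, Finset.card_image_of_injOn hinj, hcard]
  set M : ℕ → Prop := fun v => ∃ x ∈ s, x.val = v with hM
  have hpair : ∀ i, i < a → (M (2*i) ∨ M (2*i+1)) := by
    intro i hi
    have h1 : i ∈ Finset.range a := Finset.mem_range.mpr hi
    rw [← himg, Finset.mem_image] at h1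
    obtain ⟨x, hx, hxe⟩ := h1
    have : x.val = 2*i ∨ x.val = 2*i+1 := by omega
    rcases this with h | h
    · exact Or.inl ⟨x, hx, h⟩
    · exact Or.inr ⟨x, hx, h⟩
  have hnadj : ∀ v w, M v → M w → v ≠ w →
      ¬(v+1 = w ∨ w+1 = v ∨ v+a = w ∨ w+a = v ∨ (w = 0 ∧ v+1 = 2*a) ∨ (v = 0 ∧ w+1 = 2*a)) := by
    rintro v w ⟨x, hx, rfl⟩ ⟨y, hy, rfl⟩ hne h
    exact hs x hx y hy ((adj_iff a (by omega) x y).mpr ⟨hne, h⟩)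
  have chainUp : ∀ k, k ≤ a - 1 → M 1 → M (2*k+1) := by
    intro k
    induction k with
    | zero => intro _ h1; simpa using h1
    | succ k ih =>
      intro hk h1
      have hm : M (2*k+1) := ih (by omega) h1
      rcases hpair (k+1) (by omega) with h | h
      · exfalso
        exact hnadj (2*k+1) (2*(k+1)) hm h (by omega) (by omega)
      · exact h
  have chainDown : ∀ k, 1 ≤ k → k ≤ a → M 0 → M (2*(a-k)) := by
    intro k
    induction k with
    | zero => omega
    | succ k ih =>
      intro _ hk h0
      rcases Nat.eq_zero_or_pos k with hk0 | hk1
      · subst hk0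
        rcases hpair (a-1) (by omega) with h | h
        · simpa using h
        · exfalso
          refine hnadj (2*(a-1)+1) 0 h h0 (by omega) ?_
        
          omega
      · have hm : M (2*(a-k)) := ih hk1 (by omega) h0
        rcases hpair (a-k-1) (by omega) with h | h
        · have : 2*(a-k-1) = 2*(a-(k+1)) := by omega
          rwa [this] at h
        · exfalso
          refine hnadj (2*(a-k-1)+1) (2*(a-k)) h hm (by omega) (by omega)
  rcases hpair 0 (by omega) with h0 | h1
  · simp only [Nat.mul_zero] at h0
    have hma : M (2*(a-(a/2))) := chainDown (a/2) (by omega) (by omega) h0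
    have heq : 2*(a-(a/2)) = a := by omega
    rw [heq] at hma
    exact hnadj 0 a h0 hma (by omega) (by omega)
  · simp only [Nat.mul_zero, Nat.zero_add] at h1
    have hma : M (2*(a/2)+1) := chainUp (a/2) (by omega) h1
    have heq : 2*(a/2)+1 = a+1 := by omega
    rw [heq] at hma
    exact hnadj 1 (a+1) h1 hma (by omega) (by omega)

lemma alpha_eq' {V : Type*} [Fintype V] (G : SimpleGraph V) (m : ℕ)
    (hex : ∃ s : Finset V, (∀ u ∈ s, ∀ v ∈ s, ¬ G.Adj u v) ∧ s.card = m)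
    (hub : ∀ s : Finset V, (∀ u ∈ s, ∀ v ∈ s, ¬ G.Adj u v) → s.card ≤ m) :
    alphaNum G = m := by
  unfold alphaNum
  have hb : ∀ k ∈ {k | ∃ s : Finset V, (∀ u ∈ s, ∀ v ∈ s, ¬ G.Adj u v) ∧ s.card = k}, k ≤ m := by
    rintro k ⟨s, h1, rfl⟩
    exact hub s h1
  apply le_antisymm
  · exact csSup_le ⟨m, hex⟩ hb
  · exact le_csSup ⟨m, hb⟩ hex

def ef (a i : ℕ) : ℕ := if i < a/2 then 2*i else a+1+2*(i - a/2)

lemma ef_lt (a i : ℕ) (ha : 2 ≤ a) (hi : i < a-1) : ef a i < 2*a := by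
  unfold ef; split <;> omega

lemma odd_lower (a : ℕ) (ha : 2 ≤ a) (hao : a % 2 = 1) :
    ∃ s : Finset (Fin (2*a)), (∀ u ∈ s, ∀ v ∈ s, ¬ (circulantGraph (2*a) a).Adj u v) ∧
      s.card = a := by
  refine ⟨Finset.univ.image (fun i : Fin a => (⟨2*i.val, by have := i.isLt; omega⟩ : Fin (2*a))),
    ?_, ?_⟩
  · intro u hu v hv hadj
    simp only [Finset.mem_image, Finset.mem_univ, true_and] at hu hv
    obtain ⟨i, rfl⟩ := hu
    obtain ⟨j, rfl⟩ := hv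
    rw [adj_iff a (by omega)] at hadj
    obtain ⟨h1, h2⟩ := hadj
    simp only [Fin.val_mk] at h1 h2 ⊢
    omega
  · rw [Finset.card_image_of_injective _ ?_, Finset.card_univ, Fintype.card_fin]
    intro i j hij
    have := congrArg Fin.val hij
    simp only [Fin.val_mk] at this
    exact Fin.ext (by omega)

lemma even_lower (a : ℕ) (ha : 2 ≤ a) (hae : a % 2 = 0) :
    ∃ s : Finset (Fin (2*a)), (∀ u ∈ s, ∀ v ∈ s, ¬ (circulantGraph (2*a) a).Adj u v) ∧
      s.card = a - 1 := by
  refine ⟨Finset.univ.image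
      (fun i : Fin (a-1) => (⟨ef a i.val, ef_lt a i.val ha i.isLt⟩ : Fin (2*a))), ?_, ?_⟩
  · intro u hu v hv hadj
    simp only [Finset.mem_image, Finset.mem_univ, true_and] at hu hv
    obtain ⟨i, rfl⟩ := hu
    obtain ⟨j, rfl⟩ := hv
    rw [adj_iff a (by omega)] at hadj
    obtain ⟨h1, h2⟩ := hadj
    simp only [Fin.val_mk] at h1 h2
    have hi := i.isLt
    have hj := j.isLt
    unfold ef at h1 h2
    split_ifs at h1 h2 <;> omega
  · rw [Finset.card_image_of_injective _ ?_, Finset.card_univ, Fintype.card_fin]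
    intro i j hij
    have h := congrArg Fin.val hij
    simp only [Fin.val_mk] at h
    have hi := i.isLt
    have hj := j.isLt
    unfold ef at h
    refine Fin.ext ?_
    split_ifs at h <;> omega

theorem stmt2 (a : ℕ) (ha : 2 ≤ a) :
    (Odd a → alphaNum (circulantGraph (2 * a) a) = a) ∧
    (Even a → alphaNum (circulantGraph (2 * a) a) = a - 1) := by
  constructor
  · intro hodd
    have hao : a % 2 = 1 := Nat.odd_iff.mp hodd
    exact alpha_eq' _ a (odd_lower a ha hao) (fun s hs => indep_card_le a ha s hs)
  · intro heven
    have hae : a % 2 = 0 := Nat.even_iff.mp heven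
    refine alpha_eq' _ (a-1) (even_lower a ha hae) (fun s hs => ?_)
    have h1 := indep_card_le a ha s hs
    have h2 : s.card ≠ a := fun h => even_case a ha hae s hs h
    omega
end

section
/- For every odd integer a ≥ 2, β_b(C(2a;1,a)) = α(C(2a;1,a)) = a. -/
/-! The even vertices form an independent set of size `a`, since both steps `1` and `a` are odd
while `2a` is even; its indicator is an independent broadcast of cost `a`.

Conversely, reduce vertices mod `a`. If `u + i ≡ v + j (mod a)` then `d(u, v) ≤ max i j + 1`:
walk along the cycle, using the chord `{x, x + a}` once if needed. So for an independent
broadcast `f` the arcs `{v, v + 1, …, v + f v - 1} mod a` of distinct broadcasting vertices are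
disjoint, and each has `f v ≤ e(v) ≤ a` elements; hence `∑ f ≤ a`. Applied to the indicator of
an independent set, this bound also gives `α ≤ a`. -/

section Broadcast

variable {V : Type*} [Fintype V] {G : SimpleGraph V}

lemma one_le_eccent [Nontrivial V] (hG : G.Connected) (v : V) : 1 ≤ eccent G v := by
  obtain ⟨u, hu⟩ := exists_ne v
  exact (hG.pos_dist_of_ne hu.symm).trans_le (Finset.le_sup (f := G.dist v) (Finset.mem_univ u))

lemma isIndepBroadcast_indicator [DecidableEq V] [Nontrivial V] (hG : G.Connected)
    {s : Finset V} (hs : ∀ u ∈ s, ∀ v ∈ s, ¬ G.Adj u v) :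
    IsIndepBroadcast G fun v => if v ∈ s then 1 else 0 := by
  refine ⟨fun v => ?_, fun u v huv hu hv => ?_⟩
  · dsimp only
    split_ifs
    · exact one_le_eccent hG v
    · exact Nat.zero_le _
  · have hu : u ∈ s := by by_contra h; simp [h] at hu
    have hv : v ∈ s := by by_contra h; simp [h] at hv
    have hpos := hG.pos_dist_of_ne huv
    have hne : G.dist u v ≠ 1 := fun h => hs u hu v hv (SimpleGraph.dist_eq_one_iff_adj.mp h)
    simp only [hu, hv, if_true, max_self]
    omega

lemma sum_ite_mem_eq_card [DecidableEq V] (s : Finset V) :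
    ∑ v, (if v ∈ s then 1 else 0) = s.card := by
  simp

end Broadcast

namespace circulantGraph

variable {n a : ℕ}

lemma adj_of_add_mod_eq {d : ℕ} (hd : d = 1 ∨ d = a) (hdn : d % n ≠ 0) {x y : Fin n}
    (h : (x.val + d) % n = y.val) : (circulantGraph n a).Adj x y := by
  refine (SimpleGraph.fromRel_adj _ _ _).mpr
    ⟨fun hxy => hdn ?_, Or.inl (by rcases hd with rfl | rfl <;> simp [h])⟩
  subst hxy
  have : x.val + d ≡ x.val + 0 [MOD n] := by
    rw [add_zero]; exact h.trans (Nat.mod_eq_of_lt x.isLt).symm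
  exact Nat.ModEq.add_left_cancel' _ this

lemma exists_walk_length_eq (hn : 1 < n) (k : ℕ) :
    ∀ {x y : Fin n}, (x.val + k) % n = y.val →
      ∃ p : (circulantGraph n a).Walk x y, p.length = k := by
  induction k with
  | zero =>
    intro x y h
    obtain rfl : x = y := Fin.ext (by simpa [Nat.mod_eq_of_lt x.isLt] using h)
    exact ⟨.nil, rfl⟩
  | succ k ih =>
    intro x y h
    let x' : Fin n := ⟨(x.val + 1) % n, Nat.mod_lt _ (by omega)⟩
    have hx' : (circulantGraph n a).Adj x x' :=
      adj_of_add_mod_eq (Or.inl rfl) (by rw [Nat.mod_eq_of_lt hn]; omega) rfl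
    obtain ⟨p, hp⟩ := ih (x := x') (y := y) (by
      simp only [x', Nat.mod_add_mod, ← h]; ring_nf)
    exact ⟨.cons hx' p, by simp [hp]⟩

lemma modEq_or_add_modEq_of_modEq {x y : ℕ} (h : x ≡ y [MOD a]) :
    x ≡ y [MOD 2 * a] ∨ x + a ≡ y [MOD 2 * a] := by
  obtain ⟨m, hm⟩ := Nat.modEq_iff_dvd.mp h
  obtain ⟨t, rfl | rfl⟩ := Int.even_or_odd' m
  · exact Or.inl (Nat.modEq_iff_dvd.mpr ⟨t, by push_cast; linarith⟩)
  · exact Or.inr (Nat.modEq_iff_dvd.mpr ⟨t, by push_cast; linarith⟩)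

lemma exists_walk_length_le_of_modEq (ha : 0 < a) {u v : Fin (2 * a)} {k : ℕ}
    (h : u.val + k ≡ v.val [MOD a]) :
    ∃ p : (circulantGraph (2 * a) a).Walk u v, p.length ≤ k + 1 := by
  have hn : 1 < 2 * a := by omega
  rcases modEq_or_add_modEq_of_modEq h with h | h
  · obtain ⟨p, hp⟩ := exists_walk_length_eq (a := a) hn k (x := u) (y := v)
      (Eq.trans h (Nat.mod_eq_of_lt v.isLt))
    exact ⟨p, by omega⟩
  · let u' : Fin (2 * a) := ⟨(u.val + a) % (2 * a), Nat.mod_lt _ (by omega)⟩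
    have hu' : (circulantGraph (2 * a) a).Adj u u' :=
      adj_of_add_mod_eq (Or.inr rfl) (by rw [Nat.mod_eq_of_lt (by omega)]; omega) rfl
    obtain ⟨p, hp⟩ := exists_walk_length_eq (a := a) hn k (x := u') (y := v) (by
      simp only [u', Nat.mod_add_mod]
      rw [add_right_comm]
      exact Eq.trans h (Nat.mod_eq_of_lt v.isLt))
    exact ⟨.cons hu' p, by simp [hp]⟩

lemma exists_walk_length_le (ha : 0 < a) (u v : Fin (2 * a)) :
    ∃ p : (circulantGraph (2 * a) a).Walk u v, p.length ≤ a := by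
  have : NeZero a := ⟨ha.ne'⟩
  set k := ((v.val : ZMod a) - u.val).val
  have hk : u.val + k ≡ v.val [MOD a] := by
    rw [← ZMod.natCast_eq_natCast_iff]
    push_cast [k, ZMod.natCast_zmod_val]
    ring
  obtain ⟨p, hp⟩ := exists_walk_length_le_of_modEq ha hk
  exact ⟨p, hp.trans (ZMod.val_lt _)⟩

lemma connected (ha : 0 < a) : (circulantGraph (2 * a) a).Connected :=
  have : Nonempty (Fin (2 * a)) := ⟨⟨0, by omega⟩⟩
  .mk fun u v => (exists_walk_length_le ha u v).elim fun p _ => p.reachable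

lemma eccent_le (ha : 0 < a) (v : Fin (2 * a)) : eccent (circulantGraph (2 * a) a) v ≤ a :=
  Finset.sup_le fun u _ =>
    (exists_walk_length_le ha v u).elim fun p hp => (SimpleGraph.dist_le p).trans hp

lemma dist_le_of_add_modEq (ha : 0 < a) {u v : Fin (2 * a)} {i j : ℕ}
    (h : u.val + i ≡ v.val + j [MOD a]) :
    (circulantGraph (2 * a) a).dist u v ≤ max i j + 1 := by
  rcases le_total j i with hji | hij
  · have h' : u.val + (i - j) ≡ v.val [MOD a] :=
      Nat.ModEq.add_right_cancel' j (by rwa [add_assoc, Nat.sub_add_cancel hji])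
    obtain ⟨p, hp⟩ := exists_walk_length_le_of_modEq ha h'
    have := SimpleGraph.dist_le p
    omega
  · have h' : v.val + (j - i) ≡ u.val [MOD a] :=
      Nat.ModEq.add_right_cancel' i (by rw [add_assoc, Nat.sub_add_cancel hij]; exact h.symm)
    obtain ⟨p, hp⟩ := exists_walk_length_le_of_modEq ha h'
    have := SimpleGraph.dist_le p.reverse
    rw [SimpleGraph.Walk.length_reverse] at this
    omega

def residueArc (a : ℕ) (v : Fin (2 * a)) (m : ℕ) : Finset (ZMod a) :=
  (Finset.range m).image fun j => ((v.val + j : ℕ) : ZMod a)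

lemma card_residueArc [NeZero a] (v : Fin (2 * a)) {m : ℕ} (hm : m ≤ a) :
    (residueArc a v m).card = m := by
  rw [residueArc, Finset.card_image_of_injOn, Finset.card_range]
  intro i hi j hj hij
  have h : i ≡ j [MOD a] :=
    Nat.ModEq.add_left_cancel' v.val ((ZMod.natCast_eq_natCast_iff _ _ _).mp hij)
  simp only [Finset.coe_range, Set.mem_Iio] at hi hj
  rwa [Nat.ModEq, Nat.mod_eq_of_lt (by omega), Nat.mod_eq_of_lt (by omega)] at h

lemma disjoint_residueArc (ha : 0 < a) {f : Fin (2 * a) → ℕ}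
    (hf : IsIndepBroadcast (circulantGraph (2 * a) a) f) {u v : Fin (2 * a)} (huv : u ≠ v)
    (hu : 0 < f u) (hv : 0 < f v) : Disjoint (residueArc a u (f u)) (residueArc a v (f v)) := by
  simp only [residueArc, Finset.disjoint_left, Finset.mem_image, Finset.mem_range]
  rintro _ ⟨i, hi, rfl⟩ ⟨j, hj, hij⟩
  have hdist := dist_le_of_add_modEq ha ((ZMod.natCast_eq_natCast_iff _ _ _).mp hij.symm)
  have := hf.2 u v huv hu hv
  omega

lemma sum_le_of_isIndepBroadcast (ha : 0 < a) {f : Fin (2 * a) → ℕ}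
    (hf : IsIndepBroadcast (circulantGraph (2 * a) a) f) : ∑ v, f v ≤ a := by
  have : NeZero a := ⟨ha.ne'⟩
  set s := Finset.univ.filter fun v => 0 < f v
  calc ∑ v, f v = ∑ v ∈ s, f v :=
        (Finset.sum_filter_of_ne fun v _ h => Nat.pos_of_ne_zero h).symm
    _ = ∑ v ∈ s, (residueArc a v (f v)).card := Finset.sum_congr rfl fun v _ =>
        (card_residueArc v ((hf.1 v).trans (eccent_le ha v))).symm
    _ = (s.biUnion fun v => residueArc a v (f v)).card :=
        (Finset.card_biUnion fun u hu v hv huv => disjoint_residueArc ha hf huv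
          (Finset.mem_filter.mp hu).2 (Finset.mem_filter.mp hv).2).symm
    _ ≤ a := (Finset.card_le_univ _).trans (ZMod.card a).le

lemma odd_add_of_adj (hodd : Odd a) {x y : Fin (2 * a)} (h : (circulantGraph (2 * a) a).Adj x y) :
    Odd (x.val + y.val) := by
  have hpar : ∀ {x y d : ℕ}, Odd d → (x + d) % (2 * a) = y → Odd (x + y) := by
    intro x y d hd hxy
    have : y % 2 = (x + d) % 2 := by rw [← hxy, Nat.mod_mod_of_dvd _ (dvd_mul_right 2 a)]
    rw [Nat.odd_iff] at hd ⊢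
    omega
  rcases (SimpleGraph.fromRel_adj _ _ _).mp h with ⟨-, (h | h) | (h | h)⟩
  · exact hpar odd_one h
  · exact hpar hodd h
  · exact add_comm y.val x.val ▸ hpar odd_one h
  · exact add_comm y.val x.val ▸ hpar hodd h

def evens (a : ℕ) : Finset (Fin (2 * a)) :=
  Finset.univ.image fun i : Fin a => ⟨2 * i.val, by omega⟩

lemma card_evens (a : ℕ) : (evens a).card = a := by
  rw [evens, Finset.card_image_of_injective _ fun i j h => Fin.ext (by simpa using h),
    Finset.card_univ, Fintype.card_fin]

lemma evens_independent (hodd : Odd a) :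
    ∀ u ∈ evens a, ∀ v ∈ evens a, ¬ (circulantGraph (2 * a) a).Adj u v := by
  simp only [evens, Finset.mem_image, Finset.mem_univ, true_and]
  rintro _ ⟨i, rfl⟩ _ ⟨j, rfl⟩ h
  have := odd_add_of_adj hodd h
  simp only [Nat.odd_iff] at this
  omega

end circulantGraph

open circulantGraph in
theorem stmt3_general (a : ℕ) (hodd : Odd a) :
    betaB (circulantGraph (2 * a) a) = a ∧
    alphaNum (circulantGraph (2 * a) a) = a := by
  have ha : 0 < a := hodd.pos
  have : Nontrivial (Fin (2 * a)) := Fin.nontrivial_iff_two_le.mpr (by omega)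
  have hind := isIndepBroadcast_indicator (connected ha) (evens_independent hodd)
  have hcost := sum_ite_mem_eq_card (evens a)
  rw [card_evens] at hcost
  constructor
  · refine IsGreatest.csSup_eq ⟨⟨_, hind, hcost⟩, ?_⟩
    rintro _ ⟨f, hf, rfl⟩
    exact sum_le_of_isIndepBroadcast ha hf
  · refine IsGreatest.csSup_eq ⟨⟨evens a, evens_independent hodd, card_evens a⟩, ?_⟩
    rintro _ ⟨s, hs, rfl⟩
    rw [← sum_ite_mem_eq_card s]
    exact sum_le_of_isIndepBroadcast ha (isIndepBroadcast_indicator (connected ha) hs)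

theorem stmt3 (a : ℕ) (ha : 2 ≤ a) (hodd : Odd a) :
    betaB (circulantGraph (2 * a) a) = a ∧
    alphaNum (circulantGraph (2 * a) a) = a :=
  stmt3_general a hodd
end

section
/- For every even integer a ≥ 2 that is not a power of 2, β_b(C(2a;1,a)) = a. -/
/-! `C(2a;1,a)` is the Möbius ladder: the distance from `u` to `v` is `min d (a + 1 - d)`, where
`d` is the cyclic distance of `v - u` in `ℤ/2a`.

Upper bound: the distance from `u` to `v` is at most one more than the residue `e` of `v - u`
mod `a`, so in an independent broadcast `f u ≤ e`. Hence the arcs `[u, u + f u)` of `ℤ/a` of the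
broadcasting vertices are pairwise disjoint, and the total cost is at most `a`.

Lower bound: as `a` is not a power of `2`, `a = m * k` with `m ≥ 3` odd. Broadcast `k` from the
`m` multiples of `2k`. Two of them are at cyclic distance `d` with `2k ≤ d ≤ a - k` (as `a` is an
odd multiple of `k`), hence at distance at least `k + 1`. -/

open Finset
open scoped Fin.NatCast Fin.CommRing

namespace SimpleGraph

variable {V : Type*} {G : SimpleGraph V} {φ : V → ℕ}

lemma Walk.apply_le_apply_add_length (hφ : ∀ u v, G.Adj u v → φ v ≤ φ u + 1) {u v : V}
    (w : G.Walk u v) : φ v ≤ φ u + w.length := by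
  induction w with
  | nil => simp
  | cons h _ ih => grind [hφ _ _ h, Walk.length_cons]

lemma Reachable.apply_le_apply_add_dist (hφ : ∀ u v, G.Adj u v → φ v ≤ φ u + 1) {u v : V}
    (h : G.Reachable u v) : φ v ≤ φ u + G.dist u v := by
  obtain ⟨w, hw⟩ := h.exists_walk_length_eq_dist
  exact hw ▸ w.apply_le_apply_add_length hφ

end SimpleGraph

theorem ZMod.sum_le_of_le_val_sub {n : ℕ} [NeZero n] {ι : Type*} (S : Finset ι) (p : ι → ZMod n)
    (r : ι → ℕ) (hr : ∀ i ∈ S, r i ≤ n)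
    (hsep : ∀ i ∈ S, ∀ j ∈ S, i ≠ j → r i ≤ (p j - p i).val) :
    ∑ i ∈ S, r i ≤ n := by
  classical
  let arc (i : ι) : Finset (ZMod n) := (range (r i)).image fun t : ℕ => p i + t
  have card_arc : ∀ i ∈ S, #(arc i) = r i := by
    intro i hi
    refine (card_image_of_injOn fun s hs t ht hst => ?_).trans (card_range _)
    have hs : s < n := (mem_range.mp hs).trans_le (hr i hi)
    have ht : t < n := (mem_range.mp ht).trans_le (hr i hi)
    have := (ZMod.natCast_eq_natCast_iff' s t n).mp (add_left_cancel hst)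
    rwa [Nat.mod_eq_of_lt hs, Nat.mod_eq_of_lt ht] at this
  -- if the arcs of `i` and `j` met at `p i + s = p j + t` with `t ≤ s`, then `p j` would lie
  -- on the arc of `i`, at distance `s - t < r i` from `p i`
  have no_overlap : ∀ i ∈ S, ∀ j ∈ S, i ≠ j → ∀ s < r i, ∀ t, t ≤ s → p i + s ≠ p j + t := by
    intro i hi j hj hij s hs t hts heq
    have hsub : p j - p i = ((s - t : ℕ) : ZMod n) := by
      rw [Nat.cast_sub hts]; linear_combination -heq
    have := hsep i hi j hj hij
    rw [hsub, ZMod.val_natCast] at this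
    have := Nat.mod_le (s - t) n
    omega
  have disjoint : (S : Set ι).PairwiseDisjoint arc := by
    intro i hi j hj hij
    simp only [Function.onFun, arc, disjoint_left, mem_image, mem_range, not_exists, not_and]
    rintro _ ⟨s, hs, rfl⟩ t ht heq
    rcases le_total t s with hts | hst
    · exact no_overlap i hi j hj hij s hs t hts heq.symm
    · exact no_overlap j hj i hi (Ne.symm hij) t ht s hst heq
  calc ∑ i ∈ S, r i = ∑ i ∈ S, #(arc i) := (sum_congr rfl card_arc).symm
    _ = #(S.biUnion arc) := (card_biUnion disjoint).symm
    _ ≤ #(univ : Finset (ZMod n)) := card_le_univ _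
    _ = n := by rw [card_univ, ZMod.card]

theorem Nat.lt_and_add_le_of_two_mul_dvd {k m d : ℕ} (hm : Odd m) (hd : 2 * k ∣ d) (hd0 : 0 < d)
    (hdm : d ≤ m * k) : k < d ∧ d + k ≤ m * k := by
  obtain ⟨r, rfl⟩ := hm
  obtain ⟨l, rfl⟩ := hd
  have hk : 0 < k := Nat.pos_of_ne_zero (by rintro rfl; simp at hd0)
  have hl : 0 < l := Nat.pos_of_ne_zero (by rintro rfl; simp at hd0)
  have hlr : l ≤ r := by
    have : 2 * l ≤ 2 * r + 1 := Nat.le_of_mul_le_mul_right (by linarith) hk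
    omega
  constructor <;> nlinarith

theorem Nat.card_filter_two_mul_dvd {k m : ℕ} (hk : 0 < k) :
    #{i ∈ range (2 * (m * k)) | 2 * k ∣ i} = m := by
  have := Nat.count_modEq_card (2 * (m * k)) (r := 2 * k) (by omega) 0
  simp only [Nat.modEq_zero_iff_dvd, Nat.count_eq_card_filter_range] at this
  rw [this, show 2 * (m * k) = m * (2 * k) by ring, Nat.mul_mod_left,
    Nat.mul_div_cancel _ (by omega)]
  simp

theorem Fin.dvd_val_sub {n k : ℕ} (hkn : k ∣ n) {u v : Fin n} (hu : k ∣ u.val) (hv : k ∣ v.val) :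
    k ∣ (v - u).val := by
  rw [Fin.val_sub, Nat.dvd_mod_iff hkn]
  exact dvd_add (Nat.dvd_sub hkn hu) hv

theorem betaB_eq {V : Type*} [Fintype V] {G : SimpleGraph V} {k : ℕ}
    (hle : ∀ f, IsIndepBroadcast G f → ∑ v, f v ≤ k)
    (hex : ∃ f, IsIndepBroadcast G f ∧ ∑ v, f v = k) : betaB G = k :=
  IsGreatest.csSup_eq ⟨hex, by rintro _ ⟨f, hf, rfl⟩; exact hle f hf⟩

theorem circulantGraph_eq_fromRel (n a : ℕ) [NeZero n] :
    circulantGraph n a = SimpleGraph.fromRel fun u v : Fin n => v = u + 1 ∨ v = u + a := by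
  have hval (u v : Fin n) (b : ℕ) : (u.val + b) % n = v.val ↔ v = u + b := by
    rw [Fin.ext_iff, Fin.val_add, Fin.val_natCast, Nat.add_mod_mod, eq_comm]
  ext u v
  simp only [circulantGraph, SimpleGraph.fromRel_adj, hval u v 1, hval v u 1, hval u v a,
    hval v u a, Nat.cast_one]

def Fin.cycleNorm {n : ℕ} (x : Fin n) : ℕ := min x.val (n - x.val)

-- the distance from `u` to `v` in `C(2a;1,a)` is `ladderNorm a (v - u)`
def ladderNorm (a : ℕ) (x : Fin (2 * a)) : ℕ := min x.cycleNorm (a + 1 - x.cycleNorm)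

section MobiusLadder

variable {a : ℕ} [NeZero a]

@[simp]
lemma ladderNorm_zero : ladderNorm a 0 = 0 := by
  simp [ladderNorm, Fin.cycleNorm]

lemma val_one_fin_two_mul : (1 : Fin (2 * a)).val = 1 := by
  rw [Fin.val_one', Nat.mod_eq_of_lt (by have := NeZero.ne a; omega)]

lemma val_natCast_fin_two_mul : ((a : ℕ) : Fin (2 * a)).val = a := by
  rw [Fin.val_natCast, Nat.mod_eq_of_lt (by have := NeZero.ne a; omega)]

lemma ladderNorm_add_le (x : Fin (2 * a)) {y : Fin (2 * a)} (hy : y = 1 ∨ y = a) :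
    ladderNorm a (x + y) ≤ ladderNorm a x + 1 ∧ ladderNorm a x ≤ ladderNorm a (x + y) + 1 := by
  have hy : y.val = 1 ∨ y.val = a := by
    rcases hy with rfl | rfl
    exacts [.inl val_one_fin_two_mul, .inr val_natCast_fin_two_mul]
  have := x.isLt
  simp only [ladderNorm, Fin.cycleNorm, Fin.val_add_eq_ite]
  split_ifs <;> omega

lemma circulantGraph_adj_self_add {u y : Fin (2 * a)} (hy : y = 1 ∨ y = a) :
    (circulantGraph (2 * a) a).Adj u (u + y) := by
  rw [circulantGraph_eq_fromRel, SimpleGraph.fromRel_adj]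
  refine ⟨?_, Or.inl (by rcases hy with rfl | rfl <;> simp)⟩
  rw [Ne, left_eq_add, Fin.ext_iff, Fin.val_zero]
  rcases hy with rfl | rfl
  · rw [val_one_fin_two_mul]; exact one_ne_zero
  · rw [val_natCast_fin_two_mul]; exact NeZero.ne a

lemma circulantGraph_exists_walk_add (u : Fin (2 * a)) (t : ℕ) :
    ∃ w : (circulantGraph (2 * a) a).Walk u (u + t), w.length = t := by
  induction t with
  | zero => exact ⟨SimpleGraph.Walk.nil.copy rfl (by simp), by simp⟩
  | succ t ih =>
    obtain ⟨w, hw⟩ := ih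
    refine ⟨(w.concat (circulantGraph_adj_self_add (.inl rfl))).copy rfl (by push_cast; ring), ?_⟩
    simp [hw]

lemma circulantGraph_reachable (u v : Fin (2 * a)) : (circulantGraph (2 * a) a).Reachable u v := by
  obtain ⟨w, -⟩ := circulantGraph_exists_walk_add u (v - u).val
  exact ⟨w.copy rfl (by simp)⟩

lemma ladderNorm_le_circulantGraph_dist (u v : Fin (2 * a)) :
    ladderNorm a (v - u) ≤ (circulantGraph (2 * a) a).dist u v := by
  have hφ (w w' : Fin (2 * a)) (h : (circulantGraph (2 * a) a).Adj w w') :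
      ladderNorm a (w' - u) ≤ ladderNorm a (w - u) + 1 := by
    rw [circulantGraph_eq_fromRel, SimpleGraph.fromRel_adj] at h
    rcases h with ⟨-, (rfl | rfl) | (rfl | rfl)⟩ <;> rw [add_sub_right_comm]
    exacts [(ladderNorm_add_le _ (.inl rfl)).1, (ladderNorm_add_le _ (.inr rfl)).1,
      (ladderNorm_add_le _ (.inl rfl)).2, (ladderNorm_add_le _ (.inr rfl)).2]
  simpa using (circulantGraph_reachable u v).apply_le_apply_add_dist hφ

lemma circulantGraph_dist_le_mod_add_one (u v : Fin (2 * a)) :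
    (circulantGraph (2 * a) a).dist u v ≤ (v - u).val % a + 1 := by
  set y := (v - u).val % a
  obtain ⟨w, hw⟩ := circulantGraph_exists_walk_add u y
  have hlt := (v - u).isLt
  have ha := NeZero.ne a
  -- `v - u` is `y` or `y + a`; in the second case finish with a chord
  rcases lt_or_ge (v - u).val a with h | h
  · have hv : u + y = v := by
      rw [show y = (v - u).val from Nat.mod_eq_of_lt h, Fin.cast_val_eq_self, add_sub_cancel]
    exact (SimpleGraph.dist_le (w.copy rfl hv)).trans (by simp [hw])
  · have hv : u + y + a = v := by
      have : y = (v - u).val - a := by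
        rw [show y = (v - u).val % a from rfl, Nat.mod_eq_sub_mod h, Nat.mod_eq_of_lt (by omega)]
      rw [add_assoc, ← Nat.cast_add, this, Nat.sub_add_cancel h, Fin.cast_val_eq_self,
        add_sub_cancel]
    have := SimpleGraph.dist_le ((w.concat (circulantGraph_adj_self_add (.inr rfl))).copy rfl hv)
    simpa [hw] using this

lemma eccent_circulantGraph_le (v : Fin (2 * a)) : eccent (circulantGraph (2 * a) a) v ≤ a :=
  Finset.sup_le fun w _ =>
    (circulantGraph_dist_le_mod_add_one v w).trans (Nat.mod_lt _ (Nat.pos_of_neZero a))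

lemma val_natCast_sub_natCast (u v : Fin (2 * a)) :
    ((v.val : ZMod a) - u.val).val = (v - u).val % a := by
  rw [← ZMod.val_natCast]
  congr 1
  rw [sub_eq_iff_eq_add, ← Nat.cast_add, ZMod.natCast_eq_natCast_iff']
  conv_lhs => rw [← sub_add_cancel v u, Fin.val_add, Nat.mod_mod_of_dvd _ (dvd_mul_left a 2)]

theorem circulantGraph_sum_le_of_isIndepBroadcast {f : Fin (2 * a) → ℕ}
    (hf : IsIndepBroadcast (circulantGraph (2 * a) a) f) : ∑ v, f v ≤ a := by
  classical
  rw [← sum_filter_ne_zero]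
  refine ZMod.sum_le_of_le_val_sub _ (fun v => (v.val : ZMod a)) f
    (fun v _ => (hf.1 v).trans (eccent_circulantGraph_le v)) fun u hu v hv huv => ?_
  rw [val_natCast_sub_natCast]
  simp only [mem_filter, mem_univ, true_and] at hu hv
  have := hf.2 u v huv (Nat.pos_of_ne_zero hu) (Nat.pos_of_ne_zero hv)
  have := circulantGraph_dist_le_mod_add_one u v
  omega

lemma lt_ladderNorm_of_two_mul_dvd {k m : ℕ} (hm : Odd m) (hmk : a = m * k) {x : Fin (2 * a)}
    (hx : x ≠ 0) (hdvd : 2 * k ∣ x.val) : k < ladderNorm a x := by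
  have hx0 : 0 < x.val := Nat.pos_of_ne_zero (Fin.val_ne_zero_iff.mpr hx)
  have h2a : 2 * k ∣ 2 * a := mul_dvd_mul_left 2 (hmk ▸ dvd_mul_left k m)
  have hd : 2 * k ∣ x.cycleNorm := by
    rcases min_choice x.val (2 * a - x.val) with h | h <;> rw [Fin.cycleNorm, h]
    exacts [hdvd, Nat.dvd_sub h2a hdvd]
  have := x.isLt
  obtain ⟨h1, h2⟩ := Nat.lt_and_add_le_of_two_mul_dvd hm hd
    (by simp only [Fin.cycleNorm]; omega) (by simp only [Fin.cycleNorm]; omega)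
  simp only [ladderNorm]
  omega

lemma circulantGraph_lt_dist_of_two_mul_dvd {k m : ℕ} (hm : Odd m) (hmk : a = m * k)
    {u v : Fin (2 * a)} (huv : u ≠ v) (hu : 2 * k ∣ u.val) (hv : 2 * k ∣ v.val) :
    k < (circulantGraph (2 * a) a).dist u v :=
  (lt_ladderNorm_of_two_mul_dvd hm hmk (sub_ne_zero.mpr huv.symm)
    (Fin.dvd_val_sub (mul_dvd_mul_left 2 (hmk ▸ dvd_mul_left k m)) hu hv)).trans_le
    (ladderNorm_le_circulantGraph_dist u v)

theorem circulantGraph_exists_isIndepBroadcast_sum_eq {k m : ℕ} (hm : Odd m) (hm1 : 1 < m)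
    (hmk : a = m * k) :
    ∃ f, IsIndepBroadcast (circulantGraph (2 * a) a) f ∧ ∑ v, f v = a := by
  classical
  have hk : 0 < k := Nat.pos_of_ne_zero (by rintro rfl; exact NeZero.ne a (by simpa using hmk))
  have h2a : 2 * k ∣ 2 * a := mul_dvd_mul_left 2 (hmk ▸ dvd_mul_left k m)
  refine ⟨fun v => if 2 * k ∣ v.val then k else 0, ⟨fun v => ?_, fun u v huv hu hv => ?_⟩, ?_⟩
  · dsimp only
    split_ifs with hv
    · set w := v + ((2 * k : ℕ) : Fin (2 * a))
      have hw : 2 * k ∣ w.val := by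
        rw [Fin.val_add, Fin.val_natCast, Nat.dvd_mod_iff h2a]
        exact dvd_add hv ((Nat.dvd_mod_iff h2a).mpr dvd_rfl)
      have hvw : v ≠ w := by
        rw [Ne, left_eq_add, Fin.ext_iff, Fin.val_natCast, Fin.val_zero, Nat.mod_eq_of_lt]
        all_goals nlinarith
      exact (circulantGraph_lt_dist_of_two_mul_dvd hm hmk hvw hv hw).le.trans
        (le_sup (mem_univ w))
    · exact Nat.zero_le _
  · dsimp only at hu hv ⊢
    split_ifs at hu hv ⊢ with hu' hv'
    · rw [max_self]
      exact circulantGraph_lt_dist_of_two_mul_dvd hm hmk huv hu' hv'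
    all_goals omega
  · rw [Fin.sum_univ_eq_sum_range (fun i => if 2 * k ∣ i then k else 0), sum_ite,
      sum_const_zero, add_zero, sum_const, smul_eq_mul, hmk, Nat.card_filter_two_mul_dvd hk]

end MobiusLadder

theorem stmt5_general (a : ℕ) (ha : 2 ≤ a) (hnp : ∀ p : ℕ, a ≠ 2 ^ p) :
    betaB (circulantGraph (2 * a) a) = a := by
  have : NeZero a := ⟨by omega⟩
  obtain ⟨e, m, hm, hae⟩ := Nat.exists_eq_two_pow_mul_odd (NeZero.ne a)
  have hm1 : 1 < m := by
    obtain ⟨r, rfl⟩ := hm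
    have : r ≠ 0 := by rintro rfl; exact hnp e (by simpa using hae)
    omega
  exact betaB_eq (fun _ => circulantGraph_sum_le_of_isIndepBroadcast)
    (circulantGraph_exists_isIndepBroadcast_sum_eq hm hm1 (by rw [hae, mul_comm]))

theorem stmt5 (a : ℕ) (ha : 2 ≤ a) (heven : Even a) (hnp : ∀ p : ℕ, a ≠ 2 ^ p) :
    betaB (circulantGraph (2 * a) a) = a :=
  stmt5_general a ha hnp
end

section
/- For every integer a ≥ 3, β_b(C(3a;1,a)) = α(C(3a;1,a)) = a. -/
namespace Stmt6Aux

variable (a : ℕ)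

/-- vertex of `Fin (3*a)` from a natural number. -/
def vtx (ha : 3 ≤ a) (k : ℕ) : Fin (3*a) := ⟨k % (3*a), Nat.mod_lt _ (by omega)⟩

lemma vtx_val (ha : 3 ≤ a) (k : ℕ) : (vtx a ha k).val = k % (3*a) := rfl

lemma vtx_self (ha : 3 ≤ a) (v : Fin (3*a)) : vtx a ha v.val = v :=
  Fin.ext (by simp [vtx_val, Nat.mod_eq_of_lt v.isLt])

lemma adj_iff (u v : Fin (3*a)) :
    (circulantGraph (3*a) a).Adj u v ↔ u ≠ v ∧
      (((u.val + 1) % (3*a) = v.val ∨ (u.val + a) % (3*a) = v.val) ∨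
       ((v.val + 1) % (3*a) = u.val ∨ (v.val + a) % (3*a) = u.val)) := Iff.rfl

lemma adj_step1 (ha : 3 ≤ a) (k : ℕ) :
    (circulantGraph (3*a) a).Adj (vtx a ha k) (vtx a ha (k+1)) := by
  refine ⟨fun h => ?_, Or.inl (Or.inl ?_)⟩
  · have h2 : k % (3*a) = (k+1) % (3*a) := congrArg Fin.val h
    have h3 := (Nat.modEq_iff_dvd' (by omega : k ≤ k + 1)).1 h2
    have := Nat.le_of_dvd (by omega) h3
    omega
  · rw [vtx_val, vtx_val, Nat.mod_add_mod]

lemma adj_stepa (ha : 3 ≤ a) (k : ℕ) :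
    (circulantGraph (3*a) a).Adj (vtx a ha k) (vtx a ha (k+a)) := by
  refine ⟨fun h => ?_, Or.inl (Or.inr ?_)⟩
  · have h2 : k % (3*a) = (k+a) % (3*a) := congrArg Fin.val h
    have h3 := (Nat.modEq_iff_dvd' (by omega : k ≤ k + a)).1 h2
    have := Nat.le_of_dvd (by omega) h3
    omega
  · rw [vtx_val, vtx_val, Nat.mod_add_mod]

lemma adj_step2a (ha : 3 ≤ a) (k : ℕ) :
    (circulantGraph (3*a) a).Adj (vtx a ha k) (vtx a ha (k+2*a)) := by
  refine ⟨fun h => ?_, Or.inr (Or.inr ?_)⟩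
  · have h2 : k % (3*a) = (k+2*a) % (3*a) := congrArg Fin.val h
    have h3 := (Nat.modEq_iff_dvd' (by omega : k ≤ k + 2*a)).1 h2
    have := Nat.le_of_dvd (by omega) h3
    omega
  · rw [vtx_val, vtx_val, Nat.mod_add_mod]
    have : k + 2*a + a = k + 3*a := by ring
    rw [this, Nat.add_mod_right]

lemma reach_add (ha : 3 ≤ a) (k p : ℕ) :
    (circulantGraph (3*a) a).Reachable (vtx a ha k) (vtx a ha (k+p)) := by
  induction p with
  | zero => exact SimpleGraph.Reachable.refl _
  | succ p ih => exact ih.trans (adj_step1 a ha (k+p)).reachable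

lemma conn (ha : 3 ≤ a) : (circulantGraph (3*a) a).Connected := by
  rw [SimpleGraph.connected_iff]
  refine ⟨fun u v => ?_, ⟨⟨0, by omega⟩⟩⟩
  have hu := reach_add a ha 0 u.val
  have hv := reach_add a ha 0 v.val
  simp only [Nat.zero_add, vtx_self] at hu hv
  exact hu.symm.trans hv

lemma dist_add_le (ha : 3 ≤ a) (k p : ℕ) :
    (circulantGraph (3*a) a).dist (vtx a ha k) (vtx a ha (k+p)) ≤ p := by
  induction p with
  | zero => simp [SimpleGraph.dist_self]
  | succ p ih =>
    calc (circulantGraph (3*a) a).dist (vtx a ha k) (vtx a ha (k+(p+1)))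
        ≤ (circulantGraph (3*a) a).dist (vtx a ha k) (vtx a ha (k+p)) +
          (circulantGraph (3*a) a).dist (vtx a ha (k+p)) (vtx a ha (k+p+1)) :=
          (conn a ha).dist_triangle
      _ ≤ p + 1 := by
          have h1 : (circulantGraph (3*a) a).dist (vtx a ha (k+p)) (vtx a ha (k+p+1)) = 1 :=
            SimpleGraph.dist_eq_one_iff_adj.2 (adj_step1 a ha (k+p))
          omega

lemma dist_qa_le (ha : 3 ≤ a) (k q : ℕ) (hq : q ≤ 2) :
    (circulantGraph (3*a) a).dist (vtx a ha k) (vtx a ha (k + q*a)) ≤ 1 := by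
  interval_cases q
  · simp [SimpleGraph.dist_self]
  · have := SimpleGraph.dist_eq_one_iff_adj.2 (adj_stepa a ha k)
    simpa [one_mul] using this.le
  · exact (SimpleGraph.dist_eq_one_iff_adj.2 (adj_step2a a ha k)).le

lemma key_val (ha : 3 ≤ a) (u v : Fin (3*a)) :
    (u.val + (v.val + 3*a - u.val) % (3*a)) % (3*a) = v.val := by
  have h1 : u.val + (v.val + 3*a - u.val) % (3*a) ≡ u.val + (v.val + 3*a - u.val) [MOD 3*a] :=
    (Nat.mod_modEq _ _).add_left _
  have h2 : u.val + (v.val + 3*a - u.val) = v.val + 3*a := by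
    have := u.isLt; omega
  have h1' : (u.val + (v.val + 3*a - u.val) % (3*a)) % (3*a)
      = (u.val + (v.val + 3*a - u.val)) % (3*a) := h1
  rw [h2] at h1'
  rw [h1', Nat.add_mod_right, Nat.mod_eq_of_lt v.isLt]

lemma dist_le_main (ha : 3 ≤ a) (u v : Fin (3*a)) :
    (circulantGraph (3*a) a).dist u v ≤ ((v.val + 3*a - u.val) % (3*a)) % a + 1 := by
  set D := (v.val + 3*a - u.val) % (3*a) with hD
  have hDlt : D < 3*a := Nat.mod_lt _ (by omega)
  have hq : D / a ≤ 2 := by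
    have : D / a < 3 := Nat.div_lt_iff_lt_mul (by omega) |>.2 (by omega)
    omega
  have hdm : (D / a) * a + D % a = D := by
    rw [Nat.mul_comm (D / a) a]; exact Nat.div_add_mod D a
  have hv : v = vtx a ha (u.val + (D / a) * a + D % a) := by
    apply Fin.ext
    rw [vtx_val]
    have : u.val + (D / a) * a + D % a = u.val + D := by omega
    rw [this, key_val a ha u v]
  have hu : u = vtx a ha u.val := (vtx_self a ha u).symm
  calc (circulantGraph (3*a) a).dist u v
      = (circulantGraph (3*a) a).dist (vtx a ha u.val)
          (vtx a ha (u.val + (D / a) * a + D % a)) := by rw [← hu, ← hv]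
    _ ≤ (circulantGraph (3*a) a).dist (vtx a ha u.val) (vtx a ha (u.val + (D / a) * a)) +
        (circulantGraph (3*a) a).dist (vtx a ha (u.val + (D / a) * a))
          (vtx a ha (u.val + (D / a) * a + D % a)) := (conn a ha).dist_triangle
    _ ≤ 1 + D % a := by
        have h1 := dist_qa_le a ha u.val (D / a) hq
        have h2 := dist_add_le a ha (u.val + (D / a) * a) (D % a)
        omega
    _ = D % a + 1 := by omega

lemma residue_rel (ha : 3 ≤ a) (u v : Fin (3*a)) :
    v.val ≡ u.val + ((v.val + 3*a - u.val) % (3*a)) % a [MOD a] := by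
  set D := (v.val + 3*a - u.val) % (3*a) with hD
  have h1 : v.val = (u.val + D) % (3*a) := (key_val a ha u v).symm
  have hdvd : a ∣ 3*a := Dvd.intro_left 3 rfl
  have h2 : v.val % a = (u.val + D) % a := by
    rw [h1, Nat.mod_mod_of_dvd _ hdvd]
  have h3 : u.val + D ≡ u.val + D % a [MOD a] := (Nat.mod_modEq D a).symm.add_left _
  exact (Nat.ModEq.trans (by exact h2) h3 : _)

lemma ecc_le (ha : 3 ≤ a) (v : Fin (3*a)) : eccent (circulantGraph (3*a) a) v ≤ a := by
  refine Finset.sup_le fun u _ => ?_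
  have h := dist_le_main a ha v u
  have h2 : ((u.val + 3*a - v.val) % (3*a)) % a < a := Nat.mod_lt _ (by omega)
  omega

lemma one_le_ecc (ha : 3 ≤ a) (v : Fin (3*a)) : 1 ≤ eccent (circulantGraph (3*a) a) v := by
  have hadj : (circulantGraph (3*a) a).Adj v (vtx a ha (v.val + 1)) := by
    have := adj_step1 a ha v.val
    rwa [vtx_self] at this
  have hd : (circulantGraph (3*a) a).dist v (vtx a ha (v.val + 1)) = 1 :=
    SimpleGraph.dist_eq_one_iff_adj.2 hadj
  calc (1:ℕ) = (circulantGraph (3*a) a).dist v (vtx a ha (v.val + 1)) := hd.symm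
    _ ≤ eccent (circulantGraph (3*a) a) v := Finset.le_sup (Finset.mem_univ _)


lemma disj_aux (ha : 3 ≤ a) (f : Fin (3*a) → ℕ)
    (hf : IsIndepBroadcast (circulantGraph (3*a) a) f)
    (u v : Fin (3*a)) (huv : u ≠ v) (i j : ℕ) (hi : i < f u) (hj : j < f v)
    (hfu : f u ≤ a) (hji : j ≤ i)
    (he : (u.val % a + i) % a = (v.val % a + j) % a) : False := by
  have ha0 : 0 < a := by omega
  set D := (v.val + 3*a - u.val) % (3*a) with hD
  have hδ : D % a < a := Nat.mod_lt _ ha0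
  have hres : v.val ≡ u.val + D % a [MOD a] := residue_rel a ha u v
  have h1 : u.val + i ≡ v.val + j [MOD a] := by
    have e1 : (u.val % a + i) % a = (u.val + i) % a := Nat.mod_add_mod _ _ _
    have e2 : (v.val % a + j) % a = (v.val + j) % a := Nat.mod_add_mod _ _ _
    show (u.val + i) % a = (v.val + j) % a
    rw [← e1, ← e2, he]
  have h2 : u.val + i ≡ u.val + (D % a + j) [MOD a] := by
    have := hres.add_right j
    calc u.val + i ≡ v.val + j [MOD a] := h1
      _ ≡ u.val + D % a + j [MOD a] := this
      _ = u.val + (D % a + j) := by ring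
  have h3 : i ≡ D % a + j [MOD a] := Nat.ModEq.add_left_cancel' _ h2
  have h4 : (i - j) + j ≡ D % a + j [MOD a] := by
    have : (i - j) + j = i := by omega
    rw [this]; exact h3
  have h5 : i - j ≡ D % a [MOD a] := Nat.ModEq.add_right_cancel' _ h4
  have h6 : i - j = D % a := by
    have : (i - j) % a = (D % a) % a := h5
    rw [Nat.mod_eq_of_lt (by omega), Nat.mod_eq_of_lt hδ] at this
    exact this
  have hdist : (circulantGraph (3*a) a).dist u v ≤ (i - j) + 1 := by
    have := dist_le_main a ha u v
    rw [← hD] at this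
    omega
  have hlt := hf.2 u v huv (by omega) (by omega)
  have hmax : f u ≤ max (f u) (f v) := le_max_left _ _
  omega

lemma sum_le (ha : 3 ≤ a) (f : Fin (3*a) → ℕ)
    (hf : IsIndepBroadcast (circulantGraph (3*a) a) f) : ∑ v, f v ≤ a := by
  classical
  have fle : ∀ v, f v ≤ a := fun v => (hf.1 v).trans (ecc_le a ha v)
  set I : Fin (3*a) → Finset ℕ :=
    fun v => (Finset.range (f v)).image (fun i => (v.val % a + i) % a) with hI
  set s : Finset (Fin (3*a)) := Finset.univ.filter (fun v => f v ≠ 0) with hs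
  have hcard : ∀ v, (I v).card = f v := by
    intro v
    rw [hI]
    rw [Finset.card_image_of_injOn, Finset.card_range]
    intro i hi j hj hij
    simp only [Finset.coe_range, Set.mem_Iio] at hi hj
    have : i % a = j % a := Nat.ModEq.add_left_cancel' (v.val % a) hij
    rw [Nat.mod_eq_of_lt (by have := fle v; omega),
      Nat.mod_eq_of_lt (by have := fle v; omega)] at this
    exact this
  have hd : ∀ u ∈ s, ∀ v ∈ s, u ≠ v → Disjoint (I u) (I v) := by
    intro u hu v hv huv
    rw [Finset.disjoint_left]
    intro x hxu hxv
    simp only [hI, Finset.mem_image, Finset.mem_range] at hxu hxv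
    obtain ⟨i, hi, hix⟩ := hxu
    obtain ⟨j, hj, hjx⟩ := hxv
    rcases le_total j i with h | h
    · exact disj_aux a ha f hf u v huv i j hi hj (fle u) h (hix.trans hjx.symm)
    · exact disj_aux a ha f hf v u (Ne.symm huv) j i hj hi (fle v) h (hjx.trans hix.symm)
  calc ∑ v, f v = ∑ v ∈ s, f v := (Finset.sum_filter_ne_zero Finset.univ).symm
    _ = ∑ v ∈ s, (I v).card := Finset.sum_congr rfl (fun v _ => (hcard v).symm)
    _ = (s.biUnion I).card := (Finset.card_biUnion hd).symm
    _ ≤ (Finset.range a).card := by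
        apply Finset.card_le_card
        intro x hx
        simp only [Finset.mem_biUnion, hI, Finset.mem_image, Finset.mem_range] at hx
        obtain ⟨v, _, i, _, hix⟩ := hx
        rw [Finset.mem_range, ← hix]
        exact Nat.mod_lt _ (by omega)
    _ = a := Finset.card_range a

lemma X_lt (ha : 3 ≤ a) (r : ℕ) (hr : r < a) : r + a * (r % 2) < 3*a := by
  rcases Nat.mod_two_eq_zero_or_one r with h | h <;> rw [h] <;> omega

lemma indep_helper (ha : 3 ≤ a) (r s : ℕ) (hr : r < a) (hs : s < a) (hrs : r ≠ s) :
    (r + a * (r % 2) + 1) % (3*a) ≠ s + a * (s % 2) ∧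
    (r + a * (r % 2) + a) % (3*a) ≠ s + a * (s % 2) := by
  rcases Nat.mod_two_eq_zero_or_one r with h1 | h1 <;>
    rcases Nat.mod_two_eq_zero_or_one s with h2 | h2 <;>
    rw [h1, h2] <;>
    rw [Nat.mod_eq_of_lt (by omega), Nat.mod_eq_of_lt (by omega)] <;>
    omega

def indepSet (ha : 3 ≤ a) : Finset (Fin (3*a)) :=
  (Finset.range a).image (fun r => vtx a ha (r + a * (r % 2)))

lemma indepSet_val (ha : 3 ≤ a) (r : ℕ) (hr : r < a) :
    (vtx a ha (r + a * (r % 2))).val = r + a * (r % 2) :=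
  Nat.mod_eq_of_lt (X_lt a ha r hr)

lemma indepSet_card (ha : 3 ≤ a) : (indepSet a ha).card = a := by
  rw [indepSet, Finset.card_image_of_injOn, Finset.card_range]
  intro r hr s hs he
  simp only [Finset.coe_range, Set.mem_Iio] at hr hs
  have h1 := congrArg Fin.val he
  rw [indepSet_val a ha r hr, indepSet_val a ha s hs] at h1
  rcases Nat.mod_two_eq_zero_or_one r with h2 | h2 <;>
    rcases Nat.mod_two_eq_zero_or_one s with h3 | h3 <;>
    rw [h2, h3] at h1 <;> omega

lemma indepSet_indep (ha : 3 ≤ a) :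
    ∀ x ∈ indepSet a ha, ∀ y ∈ indepSet a ha, ¬ (circulantGraph (3*a) a).Adj x y := by
  intro x hx y hy hadj
  simp only [indepSet, Finset.mem_image, Finset.mem_range] at hx hy
  obtain ⟨r, hr, rfl⟩ := hx
  obtain ⟨s, hs, rfl⟩ := hy
  obtain ⟨hne, hrel⟩ := hadj
  have hrs : r ≠ s := by
    intro h; exact hne (by rw [h])
  dsimp only at hrel
  rw [indepSet_val a ha r hr, indepSet_val a ha s hs] at hrel
  rcases hrel with (h | h) | (h | h)
  · exact (indep_helper a ha r s hr hs hrs).1 h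
  · exact (indep_helper a ha r s hr hs hrs).2 h
  · exact (indep_helper a ha s r hs hr (Ne.symm hrs)).1 h
  · exact (indep_helper a ha s r hs hr (Ne.symm hrs)).2 h

lemma dist_ge_two (ha : 3 ≤ a) (u v : Fin (3*a)) (huv : u ≠ v)
    (hnadj : ¬ (circulantGraph (3*a) a).Adj u v) :
    2 ≤ (circulantGraph (3*a) a).dist u v := by
  have h0 : 0 < (circulantGraph (3*a) a).dist u v := (conn a ha).pos_dist_of_ne huv
  have h1 : (circulantGraph (3*a) a).dist u v ≠ 1 := fun h =>
    hnadj (SimpleGraph.dist_eq_one_iff_adj.1 h)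
  omega

lemma betaB_ge (ha : 3 ≤ a) :
    ∃ f : Fin (3*a) → ℕ, IsIndepBroadcast (circulantGraph (3*a) a) f ∧ ∑ v, f v = a := by
  classical
  refine ⟨fun v => if v ∈ indepSet a ha then 1 else 0, ⟨fun v => ?_, ?_⟩, ?_⟩
  · dsimp only
    split_ifs
    · exact one_le_ecc a ha v
    · exact Nat.zero_le _
  · intro u v huv hu hv
    have hu' : u ∈ indepSet a ha := by by_contra h; simp [h] at hu
    have hv' : v ∈ indepSet a ha := by by_contra h; simp [h] at hv
    have h2 := dist_ge_two a ha u v huv (indepSet_indep a ha u hu' v hv')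
    simp only [hu', hv', if_pos]
    omega
  · rw [Finset.sum_ite_mem, Finset.univ_inter, Finset.sum_const, smul_eq_mul, mul_one]
    exact indepSet_card a ha

lemma alpha_le (ha : 3 ≤ a) (s : Finset (Fin (3*a)))
    (hind : ∀ u ∈ s, ∀ v ∈ s, ¬ (circulantGraph (3*a) a).Adj u v) : s.card ≤ a := by
  classical
  have key : ∀ u ∈ s, ∀ v ∈ s, u.val < v.val → u.val % a = v.val % a → False := by
    intro u hu v hv hlt he
    have hdvd : a ∣ v.val - u.val := (Nat.modEq_iff_dvd' (le_of_lt hlt)).1 he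
    obtain ⟨k, hk⟩ := hdvd
    have hub := v.isLt
    have hlb := u.isLt
    have hk3 : k < 3 := by
      by_contra h
      push_neg at h
      have : 3 * a ≤ a * k := by
        calc 3 * a = a * 3 := by ring
          _ ≤ a * k := Nat.mul_le_mul_left a h
      omega
    have hk0 : k ≠ 0 := by intro h; rw [h] at hk; omega
    have hk12 : v.val - u.val = a ∨ v.val - u.val = 2*a := by
      have h12 : k = 1 ∨ k = 2 := by omega
      rcases h12 with h | h <;> rw [h] at hk
      · left; omega
      · right; omega
    rcases hk12 with hcase | hcase
    · refine hind u hu v hv ⟨fun h => ?_, Or.inl (Or.inr ?_)⟩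
      · have := congrArg Fin.val h; omega
      · show (u.val + a) % (3*a) = v.val
        have h1 : u.val + a < 3*a := by omega
        rw [Nat.mod_eq_of_lt h1]; omega
    · refine hind u hu v hv ⟨fun h => ?_, Or.inr (Or.inr ?_)⟩
      · have := congrArg Fin.val h; omega
      · show (v.val + a) % (3*a) = u.val
        have h1 : v.val + a = u.val + 3*a := by omega
        rw [h1, Nat.add_mod_right, Nat.mod_eq_of_lt hlb]
  have := Finset.card_le_card_of_injOn (fun v : Fin (3*a) => v.val % a)
    (fun v _ => Finset.mem_range.2 (Nat.mod_lt _ (by omega))) (s := s) (t := Finset.range a) ?_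
  · simpa using this
  · intro u hu v hv he
    simp only [Finset.mem_coe] at hu hv
    by_contra hne
    rcases Nat.lt_trichotomy u.val v.val with h | h | h
    · exact key u hu v hv h he
    · exact hne (Fin.ext h)
    · exact key v hv u hu h he.symm

end Stmt6Aux

theorem stmt6 (a : ℕ) (ha : 3 ≤ a) :
    betaB (circulantGraph (3 * a) a) = a ∧
    alphaNum (circulantGraph (3 * a) a) = a := by
  constructor
  · apply le_antisymm
    · apply csSup_le
      · exact ⟨a, Stmt6Aux.betaB_ge a ha⟩
      · rintro k ⟨f, hf, rfl⟩
        exact Stmt6Aux.sum_le a ha f hf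
    · apply le_csSup
      · exact ⟨a, fun k hk => by
          obtain ⟨f, hf, rfl⟩ := hk
          exact Stmt6Aux.sum_le a ha f hf⟩
      · exact Stmt6Aux.betaB_ge a ha
  · apply le_antisymm
    · apply csSup_le
      · exact ⟨a, Stmt6Aux.indepSet a ha, Stmt6Aux.indepSet_indep a ha,
          Stmt6Aux.indepSet_card a ha⟩
      · rintro k ⟨s, hind, rfl⟩
        exact Stmt6Aux.alpha_le a ha s hind
    · apply le_csSup
      · exact ⟨a, fun k hk => by
          obtain ⟨s, hind, rfl⟩ := hk
          exact Stmt6Aux.alpha_le a ha s hind⟩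
      · exact ⟨Stmt6Aux.indepSet a ha, Stmt6Aux.indepSet_indep a ha,
          Stmt6Aux.indepSet_card a ha⟩
end

section
/- The circulant graph C(21;1,2) admits no 2-bounded optimal independent broadcast: β_b(C(21;1,2)) ≥ 9, but every independent broadcast f on C(21;1,2) with f(v) ≤ 2 for all v satisfies σ(f) ≤ 8. -/
section Broadcast

variable {V : Type*} [Fintype V] {G : SimpleGraph V}

lemma dist_le_eccent (G : SimpleGraph V) (u v : V) : G.dist u v ≤ eccent G u :=
  Finset.le_sup (f := G.dist u) (Finset.mem_univ v)

lemma IsIndepBroadcast.eq_zero_or_eq_zero_or_lt_dist {f : V → ℕ} (hf : IsIndepBroadcast G f)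
    {u v : V} (huv : u ≠ v) : f u = 0 ∨ f v = 0 ∨ max (f u) (f v) < G.dist u v := by
  by_contra! h
  exact h.2.2.not_gt (hf.2 u v huv (Nat.pos_of_ne_zero h.1) (Nat.pos_of_ne_zero h.2.1))

lemma IsIndepBroadcast.sum_le_betaB {f : V → ℕ} (hf : IsIndepBroadcast G f) :
    ∑ v, f v ≤ betaB G := by
  refine le_csSup ⟨∑ v, eccent G v, ?_⟩ ⟨f, hf, rfl⟩
  rintro _ ⟨g, hg, rfl⟩
  exact Finset.sum_le_sum fun v _ => hg.1 v

lemma isIndepBroadcast_ite_mem [DecidableEq V] {S : Finset V} {k : ℕ} (hS : 1 < S.card)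
    (hsep : ∀ u ∈ S, ∀ v ∈ S, u ≠ v → k < G.dist u v) :
    IsIndepBroadcast G (fun v => if v ∈ S then k else 0) := by
  refine ⟨fun u => ?_, fun u v huv hu hv => ?_⟩
  · dsimp only
    split_ifs with hu
    · obtain ⟨v, hv, hvu⟩ := Finset.exists_mem_ne hS u
      exact (hsep u hu v hv hvu.symm).le.trans (dist_le_eccent G u v)
    · exact Nat.zero_le _
  · have hu' : u ∈ S := by by_contra h; simp [h] at hu
    have hv' : v ∈ S := by by_contra h; simp [h] at hv
    simpa [hu', hv'] using hsep u hu' v hv' huv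

lemma card_mul_le_betaB [DecidableEq V] {S : Finset V} {k : ℕ} (hS : 1 < S.card)
    (hsep : ∀ u ∈ S, ∀ v ∈ S, u ≠ v → k < G.dist u v) : S.card * k ≤ betaB G := by
  have := (isIndepBroadcast_ite_mem hS hsep).sum_le_betaB
  rwa [Finset.sum_ite_mem, Finset.univ_inter, Finset.sum_const, smul_eq_mul] at this

end Broadcast

lemma Fintype.sum_sum_add_eq_card_nsmul {G M ι : Type*} [AddGroup G] [Fintype G]
    [AddCommMonoid M] (s : Finset ι) (c : ι → G) (f : G → M) :
    ∑ i, ∑ k ∈ s, f (i + c k) = s.card • ∑ i, f i := by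
  rw [Finset.sum_comm, Finset.sum_congr rfl fun k _ =>
    Fintype.sum_equiv (Equiv.addRight (c k)) (fun i => f (i + c k)) f fun _ => rfl,
    Finset.sum_const]

section Circulant

open Fin.CommRing

variable {n a : ℕ} [NeZero n]

lemma Fin.eq_add_natCast_iff {u v : Fin n} {k : ℕ} : v = u + k ↔ (u.val + k) % n = v.val := by
  rw [Fin.ext_iff, Fin.val_add, Fin.val_natCast, Nat.add_mod_mod, eq_comm]

lemma circulantGraph_adj_iff {u v : Fin n} :
    (circulantGraph n a).Adj u v ↔
      u ≠ v ∧ (v = u + 1 ∨ v = u + a ∨ u = v + 1 ∨ u = v + a) := by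
  simp only [circulantGraph, SimpleGraph.fromRel_adj, ← Nat.cast_one (R := Fin n),
    Fin.eq_add_natCast_iff, or_assoc]

lemma circulantGraph_dist_add_one_le (u : Fin n) : (circulantGraph n a).dist u (u + 1) ≤ 1 := by
  by_cases h : u = u + 1
  · rw [← h, SimpleGraph.dist_self]; exact zero_le_one
  · exact (SimpleGraph.dist_eq_one_iff_adj.2 (circulantGraph_adj_iff.2 ⟨h, .inl rfl⟩)).le

lemma circulantGraph_dist_add_le (u : Fin n) : (circulantGraph n a).dist u (u + a) ≤ 1 := by
  by_cases h : u = u + a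
  · rw [← h, SimpleGraph.dist_self]; exact zero_le_one
  · exact (SimpleGraph.dist_eq_one_iff_adj.2 (circulantGraph_adj_iff.2 ⟨h, .inr (.inl rfl)⟩)).le

lemma circulantGraph_reachable_add_natCast (u : Fin n) (k : ℕ) :
    (circulantGraph n a).Reachable u (u + k) := by
  induction k with
  | zero => simp
  | succ k ih =>
    rw [Nat.cast_succ, ← add_assoc]
    by_cases h : u + k = u + k + 1
    · rwa [← h]
    · exact ih.trans (circulantGraph_adj_iff.2 ⟨h, .inl rfl⟩).reachable

lemma circulantGraph_connected : (circulantGraph n a).Connected := by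
  refine SimpleGraph.Connected.mk fun u v => ?_
  simpa using circulantGraph_reachable_add_natCast u (v - u).val

lemma circulantGraph_exists_eq_add_intCast_of_walk (ha : 1 ≤ a) {u v : Fin n}
    (p : (circulantGraph n a).Walk u v) : ∃ z : ℤ, z.natAbs ≤ a * p.length ∧ v = u + z := by
  induction p with
  | nil => exact ⟨0, by simp, by simp⟩
  | @cons u w v huw p ih =>
    obtain ⟨z, hz, rfl⟩ := ih
    have : ∃ y : ℤ, y.natAbs ≤ a ∧ w = u + y := by
      obtain ⟨-, rfl | rfl | rfl | rfl⟩ := circulantGraph_adj_iff.1 huw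
      · exact ⟨1, by simpa using ha, by simp⟩
      · exact ⟨a, by simp, by simp⟩
      · exact ⟨-1, by simpa using ha, by simp⟩
      · exact ⟨-a, by simp, by simp⟩
    obtain ⟨y, hy, rfl⟩ := this
    refine ⟨y + z, ?_, by push_cast; ring⟩
    rw [SimpleGraph.Walk.length_cons, mul_add_one]
    omega

lemma circulantGraph_lt_dist (ha : 1 ≤ a) {u v : Fin n} {k : ℕ}
    (h : ∀ z : ℤ, z.natAbs ≤ a * k → v ≠ u + z) : k < (circulantGraph n a).dist u v := by
  by_contra! hle
  obtain ⟨p, hp⟩ := circulantGraph_connected.exists_walk_length_eq_dist u v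
  obtain ⟨z, hz, rfl⟩ := circulantGraph_exists_eq_add_intCast_of_walk ha p
  exact h z (hz.trans (by rw [hp]; gcongr)) rfl

lemma circulantGraph_two_dist_add_natCast_le (u : Fin n) (k : ℕ) :
    (circulantGraph n 2).dist u (u + k) ≤ (k + 1) / 2 := by
  induction k using Nat.strong_induction_on with
  | _ k ih =>
    match k with
    | 0 => simp
    | 1 => simpa using circulantGraph_dist_add_one_le u
    | k + 2 =>
      have hsplit : u + (k + 2 : ℕ) = u + k + 2 := by push_cast; ring
      calc (circulantGraph n 2).dist u (u + (k + 2 : ℕ))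
          ≤ (circulantGraph n 2).dist u (u + k) +
              (circulantGraph n 2).dist (u + k) (u + k + 2) := by
            rw [hsplit]
            exact circulantGraph_connected.dist_triangle
        _ ≤ (k + 1) / 2 + 1 :=
            add_le_add (ih k (by omega)) (by exact_mod_cast circulantGraph_dist_add_le _)
        _ = (k + 2 + 1) / 2 := by omega

lemma IsIndepBroadcast.sum_window_le_two (hn : 5 ≤ n) {f : Fin n → ℕ}
    (hf : IsIndepBroadcast (circulantGraph n 2) f) (hf2 : ∀ v, f v ≤ 2) (i : Fin n) :
    ∑ k ∈ Finset.range 5, f (i + k) ≤ 2 := by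
  have hpair : ∀ p q : ℕ, p < q ∧ q < 5 → f (i + p) = 0 ∨ f (i + q) = 0 ∨
      (f (i + p) ≤ 1 ∧ f (i + q) ≤ 1 ∧ 3 ≤ q - p) := by
    rintro p q ⟨hpq, hq⟩
    have hne : i + p ≠ i + q := by
      rw [Ne, add_right_inj, Fin.ext_iff, Fin.val_natCast, Fin.val_natCast,
        Nat.mod_eq_of_lt (by omega), Nat.mod_eq_of_lt (by omega)]
      omega
    have hdist : (circulantGraph n 2).dist (i + p) (i + q) ≤ (q - p + 1) / 2 := by
      have := circulantGraph_two_dist_add_natCast_le (i + p : Fin n) (q - p)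
      rwa [add_assoc, ← Nat.cast_add, Nat.add_sub_cancel' hpq.le] at this
    have := hf.eq_zero_or_eq_zero_or_lt_dist hne
    omega
  have := hpair 0 1 (by decide); have := hpair 0 2 (by decide); have := hpair 0 3 (by decide)
  have := hpair 0 4 (by decide); have := hpair 1 2 (by decide); have := hpair 1 3 (by decide)
  have := hpair 1 4 (by decide); have := hpair 2 3 (by decide); have := hpair 2 4 (by decide)
  have := hpair 3 4 (by decide)
  have hb : ∀ p : ℕ, f (i + p) ≤ 2 := fun p => hf2 _
  have := hb 0; have := hb 1; have := hb 2; have := hb 3; have := hb 4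
  simp only [Finset.sum_range_succ, Finset.sum_range_zero]
  omega

lemma IsIndepBroadcast.five_mul_sum_le (hn : 5 ≤ n) {f : Fin n → ℕ}
    (hf : IsIndepBroadcast (circulantGraph n 2) f) (hf2 : ∀ v, f v ≤ 2) :
    5 * ∑ v, f v ≤ 2 * n := by
  calc 5 * ∑ v, f v = ∑ i, ∑ k ∈ Finset.range 5, f (i + k) := by
        rw [Fintype.sum_sum_add_eq_card_nsmul, Finset.card_range, smul_eq_mul]
    _ ≤ ∑ _i : Fin n, 2 := Finset.sum_le_sum fun i _ => hf.sum_window_le_two hn hf2 i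
    _ = 2 * n := by simp [mul_comm]

lemma nine_le_betaB_circulantGraph_21_2 : 9 ≤ betaB (circulantGraph 21 2) := by
  have hsep : ∀ u ∈ ({0, 7, 14} : Finset (Fin 21)), ∀ v ∈ ({0, 7, 14} : Finset (Fin 21)),
      u ≠ v → ∀ z ∈ Finset.Icc (-6 : ℤ) 6, v ≠ u + z := by decide
  refine card_mul_le_betaB (k := 3) (by decide) fun u hu v hv huv =>
    circulantGraph_lt_dist (by norm_num) fun z hz => hsep u hu v hv huv z ?_
  rw [Finset.mem_Icc]
  omega

end Circulant

theorem stmt9 :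
    9 ≤ betaB (circulantGraph 21 2) ∧
    ∀ f : Fin 21 → ℕ, IsIndepBroadcast (circulantGraph 21 2) f →
      (∀ v, f v ≤ 2) → (∑ v, f v) ≤ 8 :=
  ⟨nine_le_betaB_circulantGraph_21_2, fun f hf hf2 => by
    have := hf.five_mul_sum_le (by norm_num) hf2
    omega⟩
end

section
/- If n and a are integers with 3 ≤ a ≤ ⌊n/2⌋ and 3a ≤ n, then every 2-bounded independent broadcast f on C(n;1,a) satisfies σ(f) ≤ ⌊(n − |V_f^2|)/2⌋, where V_f^2 is the set of vertices v with f(v) = 2. -/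
/-!
Charge every vertex `v` with `f v = 1` the pair `{v, v + 1}` and every vertex with `f v = 2` its
closed neighbourhood, which has five vertices since `C(n;1,a)` is 4-regular when `2 ≤ a` and
`3a ≤ n`. Independence of `f` makes these territories pairwise disjoint, so
`2 |V_f^1| + 5 |V_f^2| ≤ n`, that is `2 σ(f) + |V_f^2| ≤ n`.
-/

open Finset

lemma SimpleGraph.dist_le_two_of_adj_or_eq {V : Type*} {G : SimpleGraph V} {u x v : V}
    (hux : G.Adj u x ∨ u = x) (hxv : G.Adj x v ∨ x = v) : G.dist u v ≤ 2 := by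
  rcases hux with hux | rfl <;> rcases hxv with hxv | rfl
  · simpa using G.dist_le (hux.toWalk.append hxv.toWalk)
  · exact (G.dist_eq_one_iff_adj.2 hux).trans_le one_le_two
  · exact (G.dist_eq_one_iff_adj.2 hxv).trans_le one_le_two
  · simp

lemma sum_eq_card_add_two_mul_card {ι : Type*} [Fintype ι] {f : ι → ℕ} (hb : ∀ i, f i ≤ 2) :
    ∑ i, f i = #{i | f i = 1} + 2 * #{i | f i = 2} := by
  simp only [card_filter, mul_sum, ← sum_add_distrib]
  refine sum_congr rfl fun i _ => ?_
  have := hb i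
  split_ifs <;> omega

section Territory

open SimpleGraph

variable {V : Type*} [Fintype V] [DecidableEq V] {G : SimpleGraph V} [DecidableRel G.Adj]
  {s : V → V} {f : V → ℕ}

variable (G s f) in
def broadcastTerritory (v : V) : Finset V :=
  if f v = 2 then insert v (G.neighborFinset v) else {v, s v}

lemma adj_or_eq_of_mem_broadcastTerritory (hs : ∀ v, G.Adj v (s v)) {v x : V}
    (hx : x ∈ broadcastTerritory G s f v) : G.Adj v x ∨ v = x := by
  unfold broadcastTerritory at hx
  split_ifs at hx
  · rcases mem_insert.1 hx with rfl | hx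
    · exact Or.inr rfl
    · exact Or.inl ((mem_neighborFinset G v x).1 hx)
  · rcases mem_insert.1 hx with rfl | hx
    · exact Or.inr rfl
    · exact Or.inl (mem_singleton.1 hx ▸ hs v)

lemma disjoint_broadcastTerritory (hf : IsIndepBroadcast G f) (hb : ∀ v, f v ≤ 2)
    (hs_inj : Function.Injective s) (hs : ∀ v, G.Adj v (s v)) {u v : V} (huv : u ≠ v)
    (hu : 0 < f u) (hv : 0 < f v) :
    Disjoint (broadcastTerritory G s f u) (broadcastTerritory G s f v) := by
  have hdist := hf.2 u v huv hu hv
  rw [Finset.disjoint_left]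
  intro x hxu hxv
  by_cases h2 : f u = 2 ∨ f v = 2
  · have := dist_le_two_of_adj_or_eq (adj_or_eq_of_mem_broadcastTerritory hs hxu)
      ((adj_or_eq_of_mem_broadcastTerritory hs hxv).imp Adj.symm Eq.symm)
    omega
  · have hu1 : f u = 1 := by have := hb u; omega
    have hv1 : f v = 1 := by have := hb v; omega
    have hnadj : ¬ G.Adj u v := fun h => by
      rw [← dist_eq_one_iff_adj] at h
      omega
    simp only [broadcastTerritory, hu1, hv1, OfNat.one_ne_ofNat, if_false, mem_insert,
      mem_singleton] at hxu hxv
    rcases hxu with rfl | rfl <;> rcases hxv with h | h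
    · exact huv h
    · exact hnadj (h ▸ hs v).symm
    · exact hnadj (h ▸ hs u)
    · exact huv (hs_inj h)

lemma card_broadcastTerritory_of_eq_two {v : V} (hv : f v = 2) :
    #(broadcastTerritory G s f v) = G.degree v + 1 := by
  rw [broadcastTerritory, if_pos hv, card_insert_of_notMem (notMem_neighborFinset_self G v),
    card_neighborFinset_eq_degree]

lemma card_broadcastTerritory_of_ne_two (hs : ∀ v, G.Adj v (s v)) {v : V} (hv : f v ≠ 2) :
    #(broadcastTerritory G s f v) = 2 := by
  rw [broadcastTerritory, if_neg hv, card_pair (hs v).ne]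

theorem two_mul_card_add_card_le_of_isIndepBroadcast (hf : IsIndepBroadcast G f)
    (hb : ∀ v, f v ≤ 2) (hs_inj : Function.Injective s) (hs : ∀ v, G.Adj v (s v)) {d : ℕ}
    (hd : ∀ v, d ≤ G.degree v) :
    2 * #{v | f v = 1} + (d + 1) * #{v | f v = 2} ≤ Fintype.card V := by
  set T₁ : Finset V := {v | f v = 1}
  set T₂ : Finset V := {v | f v = 2}
  have hT : Disjoint T₁ T₂ := disjoint_filter.2 fun v _ h => by omega
  have hpos : ∀ w ∈ T₁ ∪ T₂, 0 < f w := by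
    intro w hw
    rcases mem_union.1 hw with hw | hw <;> rw [(mem_filter.1 hw).2] <;> norm_num
  have hdisj : ((T₁ ∪ T₂ : Finset V) : Set V).PairwiseDisjoint (broadcastTerritory G s f) :=
    fun u hu v hv huv => disjoint_broadcastTerritory hf hb hs_inj hs huv (hpos u hu) (hpos v hv)
  calc 2 * #T₁ + (d + 1) * #T₂
      ≤ ∑ v ∈ T₁, #(broadcastTerritory G s f v) + ∑ v ∈ T₂, #(broadcastTerritory G s f v) := by
        gcongr
        · rw [sum_congr rfl fun v hv => card_broadcastTerritory_of_ne_two hs (by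
            simp only [T₁, mem_filter] at hv; omega), sum_const, smul_eq_mul, mul_comm]
        · calc (d + 1) * #T₂ = #T₂ • (d + 1) := by rw [smul_eq_mul, mul_comm]
            _ ≤ _ := card_nsmul_le_sum _ _ _ fun v hv => by
              rw [card_broadcastTerritory_of_eq_two (mem_filter.1 hv).2]
              exact Nat.succ_le_succ (hd v)
    _ = #((T₁ ∪ T₂).biUnion (broadcastTerritory G s f)) := by
        rw [card_biUnion hdisj, sum_union hT]
    _ ≤ Fintype.card V := card_le_univ _

end Territory

section Circulant

open scoped Fin.NatCast

variable {n a : ℕ} [NeZero n]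

lemma circulantGraph_adj {i j : Fin n} :
    (circulantGraph n a).Adj i j ↔ i ≠ j ∧ (j = i + 1 ∨ j = i + a ∨ i = j + 1 ∨ i = j + a) := by
  have hval : ∀ (x y : Fin n) (c : ℕ), (x.val + c) % n = y.val ↔ y = x + (c : Fin n) :=
    fun x y c => by rw [Fin.ext_iff, Fin.val_add, Fin.val_natCast, Nat.add_mod_mod, eq_comm]
  simp only [circulantGraph, SimpleGraph.fromRel_adj, hval, Nat.cast_one, or_assoc]

lemma circulantGraph_adj_add_natCast {c : ℕ} (hc : c % n ≠ 0)
    (h : c = 1 ∨ c = a ∨ c + 1 = n ∨ c + a = n) (v : Fin n) :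
    (circulantGraph n a).Adj v (v + (c : Fin n)) := by
  have hne : v ≠ v + (c : Fin n) := fun hv => hc <| by
    rwa [left_eq_add, Fin.ext_iff, Fin.val_natCast] at hv
  refine circulantGraph_adj.2 ⟨hne, ?_⟩
  rcases h with rfl | rfl | h | h
  · simp
  · exact Or.inr (Or.inl rfl)
  · refine Or.inr (Or.inr (Or.inl ?_))
    rw [add_assoc, ← Nat.cast_add_one, h, Fin.natCast_self, add_zero]
  · refine Or.inr (Or.inr (Or.inr ?_))
    rw [add_assoc, ← Nat.cast_add, h, Fin.natCast_self, add_zero]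

lemma circulantGraph_adj_add_one (hn : 2 ≤ n) (v : Fin n) :
    (circulantGraph n a).Adj v (v + 1) := by
  simpa using circulantGraph_adj_add_natCast (c := 1) (by rw [Nat.mod_eq_of_lt hn]; omega)
    (Or.inl rfl) v

lemma four_le_degree_circulantGraph [DecidableRel (circulantGraph n a).Adj] (ha : 2 ≤ a)
    (h3a : 3 * a ≤ n) (v : Fin n) : 4 ≤ (circulantGraph n a).degree v := by
  set offsets : Finset ℕ := {1, a, n - 1, n - a}
  have hoffsets : #offsets = 4 := by
    rw [card_insert_of_notMem, card_insert_of_notMem, card_pair] <;> simp <;> omega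
  have hinj : Set.InjOn (fun c : ℕ => v + (c : Fin n)) offsets := by
    intro c hc c' hc' h
    have hlt : ∀ x ∈ offsets, x < n := by simp [offsets]; omega
    rw [add_right_inj, Fin.ext_iff, Fin.val_natCast, Fin.val_natCast,
      Nat.mod_eq_of_lt (hlt c hc), Nat.mod_eq_of_lt (hlt c' hc')] at h
    exact h
  calc 4 = #(offsets.image fun c : ℕ => v + (c : Fin n)) := by
        rw [card_image_of_injOn hinj, hoffsets]
    _ ≤ #((circulantGraph n a).neighborFinset v) := by
      refine card_le_card fun x hx => ?_
      obtain ⟨c, hc, rfl⟩ := mem_image.1 hx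
      rw [SimpleGraph.mem_neighborFinset]
      simp only [offsets, mem_insert, mem_singleton] at hc
      refine circulantGraph_adj_add_natCast ?_ ?_ v <;> rcases hc with rfl | rfl | rfl | rfl
      all_goals first | omega | rw [Nat.mod_eq_of_lt (by omega)]; omega
    _ = (circulantGraph n a).degree v := SimpleGraph.card_neighborFinset_eq_degree _ _

end Circulant

theorem stmt10_general (n a : ℕ) (ha : 3 ≤ a) (h3a : 3 * a ≤ n)
    (f : Fin n → ℕ) (hf : IsIndepBroadcast (circulantGraph n a) f)
    (hb : ∀ v, f v ≤ 2) :
    (∑ v, f v) ≤ (n - (Finset.univ.filter (fun v => f v = 2)).card) / 2 := by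
  classical
  have : NeZero n := ⟨by omega⟩
  have hcount := two_mul_card_add_card_le_of_isIndepBroadcast hf hb (add_left_injective 1)
    (circulantGraph_adj_add_one (by omega)) (four_le_degree_circulantGraph (by omega) h3a)
  rw [Fintype.card_fin] at hcount
  rw [sum_eq_card_add_two_mul_card hb]
  omega

theorem stmt10 (n a : ℕ) (ha : 3 ≤ a) (han : a ≤ n / 2) (h3a : 3 * a ≤ n)
    (f : Fin n → ℕ) (hf : IsIndepBroadcast (circulantGraph n a) f)
    (hb : ∀ v, f v ≤ 2) :
    (∑ v, f v) ≤ (n - (Finset.univ.filter (fun v => f v = 2)).card) / 2 :=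
  stmt10_general n a ha h3a f hf hb
end
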